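/- Convexity is preserved by the POMDP Bellman operator: if V : Π(S) → ℝ is convex, then the map π ↦ Σ_{k∈O} σ(k|π,a) · V(Γ(π,a,k)) is convex in π (where a term is interpreted as 0 when σ(k|π,a) = 0). Consequently, π ↦ Σ_j π(j) r(j,a) + β Σ_k σ(k|π,a) V(Γ(π,a,k)) is convex in π for each action a and β ≥ 0. -/

import Mathlib

/-!
The map `y ↦ (∑ y) • V (y / ∑ y)` on the nonnegative orthant (the perspective of `V`, extended
by `0` where `∑ y = 0`) is positively homogeneous and, when `V` is convex on the simplex,
subadditive: the normalization of `y + z` is the convex combination of those of `y` and `z` with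
weights proportional to `∑ y` and `∑ z`. Hence it is convex. The Bellman summand for observation
`k` is this perspective composed with the linear map `π ↦ (∑ i, π i * P i l * Q i k)_l`, whose
coordinate sum is `σ(k|π,a)` and which maps beliefs to nonnegative vectors.
-/

open Finset

theorem ConvexOn.sum {𝕜 E β ι : Type*} [Semiring 𝕜] [PartialOrder 𝕜] [AddCommMonoid E]
    [AddCommMonoid β] [PartialOrder β] [IsOrderedAddMonoid β] [SMul 𝕜 E] [Module 𝕜 β]
    {s : Set E} (hs : Convex 𝕜 s) (t : Finset ι) {f : ι → E → β}
    (hf : ∀ i ∈ t, ConvexOn 𝕜 s (f i)) :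
    ConvexOn 𝕜 s fun x => ∑ i ∈ t, f i x := by
  induction t using Finset.cons_induction with
  | empty => simpa using convexOn_const 0 hs
  | cons a t _ ih =>
    simp only [sum_cons]
    exact (hf a (mem_cons_self a t)).add (ih fun i hi => hf i (mem_cons_of_mem hi))

section SimplexPerspective

variable {ι : Type*} [Fintype ι] {f : (ι → ℝ) → ℝ}

noncomputable def simplexPerspective (f : (ι → ℝ) → ℝ) (y : ι → ℝ) : ℝ :=
  if ∑ j, y j = 0 then 0 else (∑ j, y j) * f (fun l => y l / ∑ j, y j)

theorem div_sum_mem_stdSimplex {y : ι → ℝ} (hy : 0 ≤ y) (hsum : ∑ j, y j ≠ 0) :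
    (fun l => y l / ∑ j, y j) ∈ stdSimplex ℝ ι :=
  ⟨fun l => div_nonneg (hy l) (sum_nonneg fun j _ => hy j), by rw [← sum_div, div_self hsum]⟩

@[simp]
theorem simplexPerspective_zero : simplexPerspective f 0 = 0 := by
  simp [simplexPerspective]

theorem simplexPerspective_smul (t : ℝ) (y : ι → ℝ) :
    simplexPerspective f (t • y) = t * simplexPerspective f y := by
  have hsum : ∑ j, (t • y) j = t * ∑ j, y j := by simp [mul_sum]
  unfold simplexPerspective
  by_cases ht : t = 0
  · simp [ht]
  by_cases hy : ∑ j, y j = 0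
  · rw [hsum, hy]
    simp
  have hnorm : (fun l => (t • y) l / ∑ j, (t • y) j) = fun l => y l / ∑ j, y j := by
    ext l
    rw [hsum, Pi.smul_apply, smul_eq_mul, mul_div_mul_left _ _ ht]
  rw [if_neg (hsum ▸ mul_ne_zero ht hy), if_neg hy, hnorm, hsum, mul_assoc]

theorem simplexPerspective_add_le (hf : ConvexOn ℝ (stdSimplex ℝ ι) f) {y z : ι → ℝ}
    (hy : 0 ≤ y) (hz : 0 ≤ z) :
    simplexPerspective f (y + z) ≤ simplexPerspective f y + simplexPerspective f z := by
  by_cases hy0 : ∑ j, y j = 0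
  · rw [(Fintype.sum_eq_zero_iff_of_nonneg hy).1 hy0, zero_add, simplexPerspective_zero, zero_add]
  by_cases hz0 : ∑ j, z j = 0
  · rw [(Fintype.sum_eq_zero_iff_of_nonneg hz).1 hz0, add_zero, simplexPerspective_zero, add_zero]
  unfold simplexPerspective
  set sy := ∑ j, y j
  set sz := ∑ j, z j
  have hsy : 0 < sy := (sum_nonneg fun j _ => hy j).lt_of_ne' hy0
  have hsz : 0 < sz := (sum_nonneg fun j _ => hz j).lt_of_ne' hz0
  have hsum : ∑ j, (y + z) j = sy + sz := sum_add_distrib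
  have hc : 0 < sy + sz := add_pos hsy hsz
  have hnorm : (fun l => (y + z) l / (sy + sz)) =
      (sy / (sy + sz)) • (fun l => y l / sy) + (sz / (sy + sz)) • (fun l => z l / sz) := by
    ext l
    simp only [Pi.add_apply, Pi.smul_apply, smul_eq_mul]
    field_simp
  have hjensen := hf.2 (div_sum_mem_stdSimplex hy hy0) (div_sum_mem_stdSimplex hz hz0)
    (div_nonneg hsy.le hc.le) (div_nonneg hsz.le hc.le) (by field_simp)
  rw [hsum, if_neg hc.ne', if_neg hy0, if_neg hz0, hnorm]
  calc (sy + sz) * f _ ≤ (sy + sz) * ((sy / (sy + sz)) • f (fun l => y l / sy) +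
        (sz / (sy + sz)) • f (fun l => z l / sz)) := mul_le_mul_of_nonneg_left hjensen hc.le
    _ = _ := by simp only [smul_eq_mul]; field_simp

theorem convexOn_simplexPerspective (hf : ConvexOn ℝ (stdSimplex ℝ ι) f) :
    ConvexOn ℝ (Set.Ici 0) (simplexPerspective f) :=
  ⟨convex_Ici 0, fun y hy z hz a b ha hb _ => by
    calc simplexPerspective f (a • y + b • z)
        ≤ simplexPerspective f (a • y) + simplexPerspective f (b • z) :=
          simplexPerspective_add_le hf (smul_nonneg ha hy) (smul_nonneg hb hz)
      _ = a • simplexPerspective f y + b • simplexPerspective f z := by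
          rw [simplexPerspective_smul, simplexPerspective_smul, smul_eq_mul, smul_eq_mul]⟩

end SimplexPerspective

section Belief

variable {ι κ : Type*} [Fintype ι]

def unnormalizedBelief (P : ι → ι → ℝ) (Q : ι → κ → ℝ) (k : κ) : (ι → ℝ) →ₗ[ℝ] ι → ℝ where
  toFun π l := ∑ i, π i * P i l * Q i k
  map_add' π ρ := by ext l; simp [add_mul, sum_add_distrib]
  map_smul' c π := by ext l; simp [mul_sum, mul_assoc]

theorem unnormalizedBelief_nonneg {P : ι → ι → ℝ} {Q : ι → κ → ℝ} (hP : ∀ i j, 0 ≤ P i j)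
    (hQ : ∀ i k, 0 ≤ Q i k) (k : κ) {π : ι → ℝ} (hπ : 0 ≤ π) :
    0 ≤ unnormalizedBelief P Q k π := fun l =>
  sum_nonneg fun i _ => mul_nonneg (mul_nonneg (hπ i) (hP i l)) (hQ i k)

end Belief

open Finset in
theorem bellman_preserves_convexity_general
    (n K : ℕ) (P : Fin n → Fin n → ℝ) (Q : Fin n → Fin K → ℝ)
    (hPnn : ∀ i j, 0 ≤ P i j)
    (hQnn : ∀ i k, 0 ≤ Q i k)
    (V : (Fin n → ℝ) → ℝ) (hV : ConvexOn ℝ (stdSimplex ℝ (Fin n)) V)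
    (r : Fin n → ℝ) (β : ℝ) (hβ : 0 ≤ β) :
    ConvexOn ℝ (stdSimplex ℝ (Fin n))
      (fun π => ∑ k, (if (∑ j, ∑ i, π i * P i j * Q i k) = 0 then 0 else
          (∑ j, ∑ i, π i * P i j * Q i k) *
            V (fun l => (∑ i, π i * P i l * Q i k) / (∑ j, ∑ i, π i * P i j * Q i k)))) ∧
    ConvexOn ℝ (stdSimplex ℝ (Fin n))
      (fun π => (∑ j, π j * r j) + β *
        ∑ k, (if (∑ j, ∑ i, π i * P i j * Q i k) = 0 then 0 else
          (∑ j, ∑ i, π i * P i j * Q i k) *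
            V (fun l => (∑ i, π i * P i l * Q i k) / (∑ j, ∑ i, π i * P i j * Q i k)))) := by
  have hsimplex := convex_stdSimplex ℝ (Fin n)
  have hterm : ∀ k, ConvexOn ℝ (stdSimplex ℝ (Fin n))
      (simplexPerspective V ∘ unnormalizedBelief P Q k) := fun k =>
    ((convexOn_simplexPerspective hV).comp_linearMap _).subset
      (fun _ hπ => unnormalizedBelief_nonneg hPnn hQnn k hπ.1) hsimplex
  have hbellman := ConvexOn.sum hsimplex univ fun k _ => hterm k
  have hreward : ConvexOn ℝ (stdSimplex ℝ (Fin n)) fun π => ∑ j, π j * r j :=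
    ((dotProductBilin ℝ ℝ).flip r).convexOn hsimplex
  exact ⟨hbellman, hreward.add (hbellman.smul hβ)⟩

open Finset in
/-- convexity is preserved by the POMDP Bellman operator: if `V` is convex
on the belief simplex, then `π ↦ ∑ k, σ(k|π,a) · V(Γ(π,a,k))` is convex in `π` (terms with
`σ(k|π,a) = 0` interpreted as `0`), and consequently
`π ↦ ∑ j, π j * r j + β * ∑ k, σ(k|π,a) · V(Γ(π,a,k))` is convex for `β ≥ 0`. -/
theorem bellman_preserves_convexity
    (n K : ℕ) (P : Fin n → Fin n → ℝ) (Q : Fin n → Fin K → ℝ)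
    (hPnn : ∀ i j, 0 ≤ P i j) (hProw : ∀ i, ∑ j, P i j = 1)
    (hQnn : ∀ i k, 0 ≤ Q i k) (hQrow : ∀ i, ∑ k, Q i k = 1)
    (V : (Fin n → ℝ) → ℝ) (hV : ConvexOn ℝ (stdSimplex ℝ (Fin n)) V)
    (r : Fin n → ℝ) (β : ℝ) (hβ : 0 ≤ β) :
    ConvexOn ℝ (stdSimplex ℝ (Fin n))
      (fun π => ∑ k, (if (∑ j, ∑ i, π i * P i j * Q i k) = 0 then 0 else
          (∑ j, ∑ i, π i * P i j * Q i k) *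
            V (fun l => (∑ i, π i * P i l * Q i k) / (∑ j, ∑ i, π i * P i j * Q i k)))) ∧
    ConvexOn ℝ (stdSimplex ℝ (Fin n))
      (fun π => (∑ j, π j * r j) + β *
        ∑ k, (if (∑ j, ∑ i, π i * P i j * Q i k) = 0 then 0 else
          (∑ j, ∑ i, π i * P i j * Q i k) *
            V (fun l => (∑ i, π i * P i l * Q i k) / (∑ j, ∑ i, π i * P i j * Q i k)))) :=
  bellman_preserves_convexity_general n K P Q hPnn hQnn V hV r β hβ
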